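/- For every positive integer i and every 1 ≤ k ≤ i+2, the rational number b(i,2,k) = ∑_{P(k,i+2)} 1/(l₁⋯l_k) − (1/2)∑_{P(k,i+1)} 1/(l₁⋯l_k) is strictly positive. -/
import Mathlib

open Finset Polynomial

/-- The set of `k`-tuples of positive integers summing to `n`. -/
def P (k n : ℕ) : Finset (Fin k → ℕ) :=
  (Finset.Nat.antidiagonalTuple k n).filter fun l => ∀ i, 0 < l i

/-- `∑_{(l₁,…,l_k)∈P(k,n)} 1/(l₁⋯l_k)`. -/
def S (k n : ℕ) : ℚ := ∑ l ∈ P k n, (∏ i, (l i : ℚ))⁻¹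

/-- `e_l(1,2,…,m)` : the l-th elementary symmetric polynomial evaluated at 1,…,m. -/
def esym (m l : ℕ) : ℚ := (((Finset.range m).val.map fun i => ((i : ℚ) + 1)).esymm l)

lemma mem_P {k n : ℕ} {l : Fin k → ℕ} : l ∈ P k n ↔ (∑ j, l j = n) ∧ ∀ j, 0 < l j := by
  simp [P, Finset.Nat.mem_antidiagonalTuple]

theorem stmt8 (i k : ℕ) (hi : 0 < i) (hk1 : 1 ≤ k) (hk2 : k ≤ i + 2) :
    0 < S k (i + 2) - S k (i + 1) / 2 := by
  have : NeZero k := ⟨by omega⟩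
  set f : (Fin k → ℕ) → (Fin k → ℕ) := fun l => Function.update l 0 (l 0 + 1) with hf
  -- sum of f l
  have hsum : ∀ l : Fin k → ℕ, ∑ j, f l j = (∑ j, l j) + 1 := by
    intro l
    rw [hf]
    simp only
    rw [Finset.sum_update_of_mem (Finset.mem_univ 0)]
    rw [Finset.sum_eq_sum_sdiff_singleton_add (Finset.mem_univ (0 : Fin k)) l]
    ring
  have hmap : ∀ l ∈ P k (i+1), f l ∈ P k (i+2) := by
    intro l hl
    rw [mem_P] at hl ⊢
    refine ⟨by rw [hsum]; omega, ?_⟩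
    intro j
    rcases eq_or_ne j 0 with h | h
    · subst h; simp [hf]
    · simp only [hf, Function.update_of_ne h]; exact hl.2 j
  have hinj : Set.InjOn f (P k (i+1)) := by
    intro a _ b _ h
    funext j
    rcases eq_or_ne j 0 with hj | hj
    · subst hj
      have := congrFun h 0
      simpa [hf] using this
    · have := congrFun h j
      simpa [hf, Function.update_of_ne hj] using this
  -- pointwise term comparison
  have hterm : ∀ l : Fin k → ℕ, (∀ j, 0 < l j) →
      (∏ j, (l j : ℚ))⁻¹ / 2 ≤ (∏ j, (f l j : ℚ))⁻¹ := by
    intro l hl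
    set R : ℚ := ∏ j ∈ Finset.univ.erase 0, (l j : ℚ) with hR
    have hRpos : 0 < R := Finset.prod_pos fun j _ => by exact_mod_cast hl j
    have hP1 : ∏ j, (l j : ℚ) = (l 0 : ℚ) * R := (Finset.mul_prod_erase _ _ (Finset.mem_univ 0)).symm
    have hP2 : ∏ j, (f l j : ℚ) = ((l 0 : ℚ) + 1) * R := by
      rw [← Finset.mul_prod_erase _ _ (Finset.mem_univ (0 : Fin k))]
      have h1 : ((f l 0 : ℕ) : ℚ) = (l 0 : ℚ) + 1 := by simp [hf]
      have h2 : ∏ j ∈ Finset.univ.erase 0, ((f l j : ℕ) : ℚ) = R := by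
        apply Finset.prod_congr rfl
        intro j hj
        have hj0 : j ≠ 0 := (Finset.mem_erase.mp hj).1
        simp [hf, Function.update_of_ne hj0]
      rw [h1, h2]
    rw [hP1, hP2]
    have hl0 : (1 : ℚ) ≤ (l 0 : ℚ) := by exact_mod_cast hl 0
    rw [mul_inv, mul_inv, div_eq_mul_inv, mul_right_comm]
    apply mul_le_mul_of_nonneg_right _ (le_of_lt (inv_pos.mpr hRpos))
    rw [mul_comm, ← mul_inv]
    apply inv_anti₀ (by linarith)
    linarith
  -- sum over image
  have himg : ∑ m ∈ (P k (i+1)).image f, (∏ j, (m j : ℚ))⁻¹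
      = ∑ l ∈ P k (i+1), (∏ j, (f l j : ℚ))⁻¹ := Finset.sum_image fun a ha b hb h => hinj ha hb h
  have hhalf : S k (i+1) / 2 ≤ ∑ m ∈ (P k (i+1)).image f, (∏ j, (m j : ℚ))⁻¹ := by
    rw [himg, S, Finset.sum_div]
    apply Finset.sum_le_sum
    intro l hl
    exact hterm l (mem_P.mp hl).2
  have hsubset : (P k (i+1)).image f ⊆ P k (i+2) := by
    intro m hm
    rcases Finset.mem_image.mp hm with ⟨l, hl, rfl⟩
    exact hmap l hl
  have hnonneg : ∀ m ∈ P k (i+2), (0:ℚ) ≤ (∏ j, (m j : ℚ))⁻¹ := by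
    intro m hm
    have := (mem_P.mp hm).2
    positivity
  rcases eq_or_lt_of_le hk1 with hk | hk
  · -- k = 1 case : do it directly
    subst hk
    have hPn : ∀ n : ℕ, 0 < n → P 1 n = {fun _ => n} := by
      intro n hn
      ext l
      rw [mem_P, Finset.mem_singleton]
      constructor
      · rintro ⟨h1, h2⟩
        funext j
        have : j = 0 := Subsingleton.elim _ _
        subst this
        simpa using h1
      · rintro rfl
        simp [hn]
    have hS : ∀ n : ℕ, 0 < n → S 1 n = (n : ℚ)⁻¹ := by
      intro n hn
      rw [S, hPn n hn]
      simp
    rw [hS _ (by omega), hS _ (by omega)]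
    have h1 : (0:ℚ) < (i:ℚ) + 2 := by positivity
    have h2 : (0:ℚ) < (i:ℚ) + 1 := by positivity
    have hi' : (1:ℚ) ≤ (i:ℚ) := by exact_mod_cast hi
    push_cast
    have key : ((i:ℚ)+1)⁻¹/2 = (2*((i:ℚ)+1))⁻¹ := by rw [mul_inv]; ring
    rw [sub_pos, key]
    apply inv_strictAnti₀ h1
    linarith
  · -- k ≥ 2 : extra witness m with m 0 = 1
    have h01 : (0 : Fin k) ≠ 1 := by
      rw [Fin.ne_iff_vne]
      simp [Fin.val_one', Nat.mod_eq_of_lt hk]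
    set m : Fin k → ℕ := fun j => 1 + if j = 1 then i + 2 - k else 0 with hm
    have hmP : m ∈ P k (i+2) := by
      rw [mem_P]
      constructor
      · rw [hm]
        simp only [Finset.sum_add_distrib, Finset.sum_ite_eq' Finset.univ (1 : Fin k)]
        simp
        omega
      · intro j; simp [hm]
    have hmnot : m ∉ (P k (i+1)).image f := by
      intro hc
      rcases Finset.mem_image.mp hc with ⟨l, hl, hlm⟩
      have := congrFun hlm 0
      simp [hf, hm, h01] at this
      have h0 := (mem_P.mp hl).2 0
      omega
    have hmpos : 0 < (∏ j, (m j : ℚ))⁻¹ := by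
      apply inv_pos.mpr
      apply Finset.prod_pos
      intro j _
      have : 0 < m j := by simp [hm]
      exact_mod_cast this
    have hbig : S k (i+2) ≥ (∏ j, (m j : ℚ))⁻¹ + ∑ x ∈ (P k (i+1)).image f, (∏ j, (x j : ℚ))⁻¹ := by
      have hins := Finset.sum_insert (f := fun x => (∏ j, (x j : ℚ))⁻¹) hmnot
      rw [S, ge_iff_le, ← hins]
      apply Finset.sum_le_sum_of_subset_of_nonneg
      · intro x hx
        rcases Finset.mem_insert.mp hx with rfl | hx
        · exact hmP
        · exact hsubset hx
      · intro x hx _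
        exact hnonneg x hx
    linarith
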